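/- Under the transverse-coordinate setup (arc-length frame path p_f twice differentiable near s₀ := s_f(t₀), ‖p_f'‖ ≡ 1, k ≠ 0 near s₀, n differentiable at s₀; p differentiable at t₀ with v(t₀) := p'(t₀); s_f differentiable at t₀; transversality ⟪t(s_f(t)), p(t) − p_f(s_f(t))⟫ = 0 near t₀), assume additionally that w̄₁, w̄₂ : ℝ → ℝ are differentiable at s₀ and satisfy w̄₁(s_f(t)) = w₁(t) and w̄₂(s_f(t)) = w₂(t) for all t near t₀, that ⟪t(s₀), v(t₀)⟫ ≠ 0 and 1 − k(s₀) w̄₁(s₀) ≠ 0. Then the spatial transverse dynamics hold: w̄₁'(s₀) = ⟪n(s₀), v(t₀)⟫ · (1 − k(s₀) w̄₁(s₀)) / ⟪t(s₀), v(t₀)⟫ + τ(s₀) w̄₂(s₀) and w̄₂'(s₀) = ⟪b(s₀), v(t₀)⟫ · (1 − k(s₀) w̄₁(s₀)) / ⟪t(s₀), v(t₀)⟫ − τ(s₀) w̄₁(s₀). -/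

import Mathlib

open scoped RealInnerProductSpace Matrix

/-- Cross product on `EuclideanSpace ℝ (Fin 3)`. -/
noncomputable def cross3 (u v : EuclideanSpace ℝ (Fin 3)) : EuclideanSpace ℝ (Fin 3) :=
  (WithLp.equiv 2 (Fin 3 → ℝ)).symm
    ![u 1 * v 2 - u 2 * v 1, u 2 * v 0 - u 0 * v 2, u 0 * v 1 - u 1 * v 0]

/-- Tangent vector of an arc-length parameterized curve. -/
noncomputable def tang (p_f : ℝ → EuclideanSpace ℝ (Fin 3)) (s : ℝ) : EuclideanSpace ℝ (Fin 3) :=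
  deriv p_f s

/-- Curvature. -/
noncomputable def curv (p_f : ℝ → EuclideanSpace ℝ (Fin 3)) (s : ℝ) : ℝ :=
  ‖deriv (deriv p_f) s‖

/-- Normal vector. -/
noncomputable def nor (p_f : ℝ → EuclideanSpace ℝ (Fin 3)) (s : ℝ) : EuclideanSpace ℝ (Fin 3) :=
  (curv p_f s)⁻¹ • deriv (deriv p_f) s

/-- Binormal vector. -/
noncomputable def binor (p_f : ℝ → EuclideanSpace ℝ (Fin 3)) (s : ℝ) : EuclideanSpace ℝ (Fin 3) :=
  cross3 (tang p_f s) (nor p_f s)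

/-- Torsion: `τ(s) = ⟪b(s), n'(s)⟫`. -/
noncomputable def tors (p_f : ℝ → EuclideanSpace ℝ (Fin 3)) (s : ℝ) : ℝ :=
  ⟪binor p_f s, deriv (nor p_f) s⟫

/-- First transverse coordinate `w₁(t) = ⟪n(s_f(t)), p(t) − p_f(s_f(t))⟫`. -/
noncomputable def w1 (p_f p : ℝ → EuclideanSpace ℝ (Fin 3)) (s_f : ℝ → ℝ) (t : ℝ) : ℝ :=
  ⟪nor p_f (s_f t), p t - p_f (s_f t)⟫

/-- Second transverse coordinate `w₂(t) = ⟪b(s_f(t)), p(t) − p_f(s_f(t))⟫`. -/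
noncomputable def w2 (p_f p : ℝ → EuclideanSpace ℝ (Fin 3)) (s_f : ℝ → ℝ) (t : ℝ) : ℝ :=
  ⟪binor p_f (s_f t), p t - p_f (s_f t)⟫

/-!
Put `X = p − p_f ∘ s_f`, `σ = s_f'(t₀)`, `v = p'(t₀)`, and differentiate at `t₀` the identities
`⟪t ∘ s_f, X⟫ = 0`, `⟪n ∘ s_f, X⟫ = w̄₁ ∘ s_f` and `⟪b ∘ s_f, X⟫ = w̄₂ ∘ s_f`.
Since `X(t₀) ⊥ t` and `(t, n, b)` is orthonormal, `X(t₀) = w̄₁ n + w̄₂ b`; differentiating the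
constant inner products of the frame gives `t' = k n`, `⟪n', n⟫ = ⟪b', b⟫ = 0` and
`⟪n', b⟫ = −⟪b', n⟫ = τ`. The three derivatives therefore read
`σ (1 − k w̄₁) = ⟪t, v⟫`, `w̄₁' σ = ⟪n, v⟫ + σ τ w̄₂` and `w̄₂' σ = ⟪b, v⟫ − σ τ w̄₁`,
and eliminating `σ` gives both formulas.
-/

open Filter Topology

local notation "E3" => EuclideanSpace ℝ (Fin 3)

section CrossProduct

open WithLp in
lemma cross3_eq (u v : E3) : cross3 u v = toLp 2 (ofLp u ⨯₃ ofLp v) := by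
  rw [cross_apply]; rfl

lemma inner_cross3_left (u v : E3) : ⟪cross3 u v, u⟫ = 0 := by
  rw [cross3_eq, EuclideanSpace.inner_eq_star_dotProduct, star_trivial]
  exact dot_self_cross _ _

lemma inner_cross3_right (u v : E3) : ⟪cross3 u v, v⟫ = 0 := by
  rw [cross3_eq, EuclideanSpace.inner_eq_star_dotProduct, star_trivial]
  exact dot_cross_self _ _

lemma norm_cross3_of_inner_eq_zero {u v : E3} (huv : ⟪u, v⟫ = 0) :
    ‖cross3 u v‖ = ‖u‖ * ‖v‖ := by
  rw [cross3_eq, InnerProductGeometry.norm_ofLp_crossProduct,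
    (InnerProductGeometry.inner_eq_zero_iff_angle_eq_pi_div_two u v).1 huv,
    Real.sin_pi_div_two, mul_one]

lemma orthonormal_cross3 {u v : E3} (hu : ‖u‖ = 1) (hv : ‖v‖ = 1) (huv : ⟪u, v⟫ = 0) :
    Orthonormal ℝ ![u, v, cross3 u v] := by
  rw [orthonormal_iff_ite]
  intro i j
  fin_cases i <;> fin_cases j <;>
    simp [hu, hv, huv, real_inner_comm u v, inner_cross3_left, inner_cross3_right,
      real_inner_comm (cross3 u v), norm_cross3_of_inner_eq_zero huv]

lemma eq_inner_smul_add_inner_smul_add_inner_cross3_smul {u v : E3} (hu : ‖u‖ = 1)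
    (hv : ‖v‖ = 1) (huv : ⟪u, v⟫ = 0) (x : E3) :
    x = ⟪u, x⟫ • u + ⟪v, x⟫ • v + ⟪cross3 u v, x⟫ • cross3 u v := by
  have hon := orthonormal_cross3 hu hv huv
  have hcard : Fintype.card (Fin 3) = Module.finrank ℝ E3 := by simp
  have h := ((basisOfOrthonormalOfCardEqFinrank hon hcard).toOrthonormalBasis
    (by rwa [coe_basisOfOrthonormalOfCardEqFinrank])).sum_repr' x
  simp only [Fin.sum_univ_three, Module.Basis.coe_toOrthonormalBasis,
    coe_basisOfOrthonormalOfCardEqFinrank] at h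
  exact h.symm

lemma DifferentiableAt.cross3 {u v : ℝ → E3} {x : ℝ} (hu : DifferentiableAt ℝ u x)
    (hv : DifferentiableAt ℝ v x) : DifferentiableAt ℝ (fun s => cross3 (u s) (v s)) x := by
  rw [differentiableAt_piLp] at hu hv ⊢
  intro i
  fin_cases i <;> simp [_root_.cross3] <;> fun_prop

end CrossProduct

lemma inner_add_inner_eq_zero_of_eventually_inner_eq {F : Type*} [NormedAddCommGroup F]
    [InnerProductSpace ℝ F] {f g : ℝ → F} {f' g' : F} {x c : ℝ} (hf : HasDerivAt f f' x)
    (hg : HasDerivAt g g' x) (h : ∀ᶠ y in 𝓝 x, ⟪f y, g y⟫ = c) :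
    ⟪f', g x⟫ + ⟪f x, g'⟫ = 0 := by
  rw [add_comm]
  exact (hf.inner ℝ hg).unique ((hasDerivAt_const x c).congr_of_eventuallyEq h)

section Frame

-- Where `curv p_f s = 0` both sides vanish, since then `deriv (deriv p_f) s = 0`.
lemma curv_smul_nor (p_f : ℝ → E3) (s : ℝ) : curv p_f s • nor p_f s = deriv (deriv p_f) s := by
  by_cases hk : curv p_f s = 0
  · rw [hk, zero_smul, eq_comm, ← norm_eq_zero]
    exact hk
  · rw [nor, smul_smul, mul_inv_cancel₀ hk, one_smul]

lemma inner_binor_tang (p_f : ℝ → E3) (s : ℝ) : ⟪binor p_f s, tang p_f s⟫ = 0 :=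
  inner_cross3_left _ _

lemma inner_binor_nor (p_f : ℝ → E3) (s : ℝ) : ⟪binor p_f s, nor p_f s⟫ = 0 :=
  inner_cross3_right _ _

variable {p_f : ℝ → E3} {s : ℝ}

lemma norm_tang (hunit : ∀ s, ‖deriv p_f s‖ = 1) : ‖tang p_f s‖ = 1 :=
  hunit s

lemma inner_tang_deriv_deriv (hunit : ∀ s, ‖deriv p_f s‖ = 1)
    (hd : DifferentiableAt ℝ (deriv p_f) s) : ⟪tang p_f s, deriv (deriv p_f) s⟫ = 0 := by
  have h := inner_add_inner_eq_zero_of_eventually_inner_eq hd.hasDerivAt hd.hasDerivAt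
    (Eventually.of_forall fun r => by rw [real_inner_self_eq_norm_sq, hunit r, one_pow])
  rw [real_inner_comm] at h
  exact add_self_eq_zero.1 h

lemma inner_tang_nor (hunit : ∀ s, ‖deriv p_f s‖ = 1) (hd : DifferentiableAt ℝ (deriv p_f) s) :
    ⟪tang p_f s, nor p_f s⟫ = 0 := by
  rw [nor, real_inner_smul_right, inner_tang_deriv_deriv hunit hd, mul_zero]

lemma norm_nor (hk : curv p_f s ≠ 0) : ‖nor p_f s‖ = 1 := by
  rw [nor, norm_smul, norm_inv, curv, norm_norm]
  exact inv_mul_cancel₀ hk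

lemma norm_binor (hunit : ∀ s, ‖deriv p_f s‖ = 1) (hd : DifferentiableAt ℝ (deriv p_f) s)
    (hk : curv p_f s ≠ 0) : ‖binor p_f s‖ = 1 := by
  rw [binor, norm_cross3_of_inner_eq_zero (inner_tang_nor hunit hd), norm_tang hunit,
    norm_nor hk, one_mul]

lemma differentiableAt_binor (hd : DifferentiableAt ℝ (deriv p_f) s)
    (hn : DifferentiableAt ℝ (nor p_f) s) : DifferentiableAt ℝ (binor p_f) s :=
  hd.cross3 hn

lemma eq_inner_nor_smul_add_inner_binor_smul (hunit : ∀ s, ‖deriv p_f s‖ = 1)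
    (hd : DifferentiableAt ℝ (deriv p_f) s) (hk : curv p_f s ≠ 0) {x : E3}
    (hx : ⟪tang p_f s, x⟫ = 0) :
    x = ⟪nor p_f s, x⟫ • nor p_f s + ⟪binor p_f s, x⟫ • binor p_f s := by
  have h := eq_inner_smul_add_inner_smul_add_inner_cross3_smul (norm_tang hunit) (norm_nor hk)
    (inner_tang_nor hunit hd) x
  rwa [hx, zero_smul, zero_add] at h

lemma inner_deriv_nor_nor (hk : ∀ᶠ r in 𝓝 s, curv p_f r ≠ 0)
    (hn : DifferentiableAt ℝ (nor p_f) s) : ⟪deriv (nor p_f) s, nor p_f s⟫ = 0 := by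
  have h := inner_add_inner_eq_zero_of_eventually_inner_eq hn.hasDerivAt hn.hasDerivAt
    (hk.mono fun r hr => by rw [real_inner_self_eq_norm_sq, norm_nor hr, one_pow])
  rw [real_inner_comm (deriv (nor p_f) s)] at h
  exact add_self_eq_zero.1 h

lemma inner_deriv_binor_binor (hunit : ∀ s, ‖deriv p_f s‖ = 1)
    (hd : ∀ᶠ r in 𝓝 s, DifferentiableAt ℝ (deriv p_f) r) (hk : ∀ᶠ r in 𝓝 s, curv p_f r ≠ 0)
    (hn : DifferentiableAt ℝ (nor p_f) s) : ⟪deriv (binor p_f) s, binor p_f s⟫ = 0 := by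
  have hb := (differentiableAt_binor hd.self_of_nhds hn).hasDerivAt
  have h := inner_add_inner_eq_zero_of_eventually_inner_eq hb hb
    ((hd.and hk).mono fun r hr => by
      rw [real_inner_self_eq_norm_sq, norm_binor hunit hr.1 hr.2, one_pow])
  rw [real_inner_comm (deriv (binor p_f) s)] at h
  exact add_self_eq_zero.1 h

lemma inner_deriv_binor_nor (hd : DifferentiableAt ℝ (deriv p_f) s)
    (hn : DifferentiableAt ℝ (nor p_f) s) : ⟪deriv (binor p_f) s, nor p_f s⟫ = -tors p_f s := by
  have h := inner_add_inner_eq_zero_of_eventually_inner_eq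
    (differentiableAt_binor hd hn).hasDerivAt hn.hasDerivAt
    (Eventually.of_forall (inner_binor_nor p_f))
  rw [tors]
  linarith

lemma inner_deriv_nor_of_inner_tang_eq_zero (hunit : ∀ s, ‖deriv p_f s‖ = 1)
    (hd : DifferentiableAt ℝ (deriv p_f) s) (hk : ∀ᶠ r in 𝓝 s, curv p_f r ≠ 0)
    (hn : DifferentiableAt ℝ (nor p_f) s) {x : E3} (hx : ⟪tang p_f s, x⟫ = 0) :
    ⟪deriv (nor p_f) s, x⟫ = tors p_f s * ⟪binor p_f s, x⟫ := by
  conv_lhs => rw [eq_inner_nor_smul_add_inner_binor_smul hunit hd hk.self_of_nhds hx]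
  simp only [inner_add_right, real_inner_smul_right, inner_deriv_nor_nor hk hn, tors,
    real_inner_comm (binor p_f s)]
  ring

lemma inner_deriv_binor_of_inner_tang_eq_zero (hunit : ∀ s, ‖deriv p_f s‖ = 1)
    (hd : ∀ᶠ r in 𝓝 s, DifferentiableAt ℝ (deriv p_f) r) (hk : ∀ᶠ r in 𝓝 s, curv p_f r ≠ 0)
    (hn : DifferentiableAt ℝ (nor p_f) s) {x : E3} (hx : ⟪tang p_f s, x⟫ = 0) :
    ⟪deriv (binor p_f) s, x⟫ = -(tors p_f s * ⟪nor p_f s, x⟫) := by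
  conv_lhs =>
    rw [eq_inner_nor_smul_add_inner_binor_smul hunit hd.self_of_nhds hk.self_of_nhds hx]
  simp only [inner_add_right, real_inner_smul_right, inner_deriv_binor_nor hd.self_of_nhds hn,
    inner_deriv_binor_binor hunit hd hk hn]
  ring

end Frame

lemma mul_deriv_eq_of_comp_eq_inner {F : Type*} [NormedAddCommGroup F] [InnerProductSpace ℝ F]
    {E p_f p : ℝ → F} {s_f w : ℝ → ℝ} {t₀ σ w' : ℝ} {E' T v : F}
    (hE : HasDerivAt E E' (s_f t₀)) (hpf : HasDerivAt p_f T (s_f t₀)) (hp : HasDerivAt p v t₀)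
    (hsf : HasDerivAt s_f σ t₀) (hw : HasDerivAt w w' (s_f t₀))
    (hcomp : ∀ᶠ t in 𝓝 t₀, w (s_f t) = ⟪E (s_f t), p t - p_f (s_f t)⟫) :
    w' * σ = σ * ⟪E', p t₀ - p_f (s_f t₀)⟫ + ⟪E (s_f t₀), v⟫ - σ * ⟪E (s_f t₀), T⟫ := by
  have h := (hw.comp t₀ hsf).unique <|
    ((hE.scomp t₀ hsf).inner ℝ (hp.sub (hpf.scomp t₀ hsf))).congr_of_eventuallyEq hcomp
  rw [h]
  simp only [Function.comp_apply, Pi.sub_apply, inner_sub_right, real_inner_smul_left,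
    real_inner_smul_right]
  ring

lemma eq_mul_div_add_of_mul_eq {σ c a d n r : ℝ} (ha : a ≠ 0) (hσ : σ * c = a)
    (hd : d * σ = n + σ * r) : d = n * c / a + r := by
  have hσ0 : σ ≠ 0 := by
    rintro rfl
    exact ha (by rw [← hσ, zero_mul])
  field_simp
  linear_combination c * hd - (d - r) * hσ

theorem spatial_transverse_dynamics_general
    (p_f p : ℝ → EuclideanSpace ℝ (Fin 3)) (s_f wb1 wb2 : ℝ → ℝ) (t₀ : ℝ)
    (hd1 : ∀ᶠ s in nhds (s_f t₀), DifferentiableAt ℝ p_f s)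
    (hd2 : ∀ᶠ s in nhds (s_f t₀), DifferentiableAt ℝ (deriv p_f) s)
    (hunit : ∀ s : ℝ, ‖deriv p_f s‖ = 1)
    (hk : ∀ᶠ s in nhds (s_f t₀), curv p_f s ≠ 0)
    (hn : DifferentiableAt ℝ (nor p_f) (s_f t₀))
    (hp : DifferentiableAt ℝ p t₀)
    (hsf : DifferentiableAt ℝ s_f t₀)
    (htrans : ∀ᶠ t in nhds t₀, ⟪tang p_f (s_f t), p t - p_f (s_f t)⟫ = 0)
    (hwb1 : DifferentiableAt ℝ wb1 (s_f t₀))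
    (hwb2 : DifferentiableAt ℝ wb2 (s_f t₀))
    (hcomp1 : ∀ᶠ t in nhds t₀, wb1 (s_f t) = w1 p_f p s_f t)
    (hcomp2 : ∀ᶠ t in nhds t₀, wb2 (s_f t) = w2 p_f p s_f t)
    (hvt : ⟪tang p_f (s_f t₀), deriv p t₀⟫ ≠ 0) :
    deriv wb1 (s_f t₀) =
        ⟪nor p_f (s_f t₀), deriv p t₀⟫ * (1 - curv p_f (s_f t₀) * wb1 (s_f t₀)) /
            ⟪tang p_f (s_f t₀), deriv p t₀⟫ +
          tors p_f (s_f t₀) * wb2 (s_f t₀) ∧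
      deriv wb2 (s_f t₀) =
        ⟪binor p_f (s_f t₀), deriv p t₀⟫ * (1 - curv p_f (s_f t₀) * wb1 (s_f t₀)) /
            ⟪tang p_f (s_f t₀), deriv p t₀⟫ -
          tors p_f (s_f t₀) * wb1 (s_f t₀) := by
  have hpf : HasDerivAt p_f (tang p_f (s_f t₀)) (s_f t₀) := hd1.self_of_nhds.hasDerivAt
  have hX : ⟪tang p_f (s_f t₀), p t₀ - p_f (s_f t₀)⟫ = 0 := htrans.self_of_nhds
  have hw1 : ⟪nor p_f (s_f t₀), p t₀ - p_f (s_f t₀)⟫ = wb1 (s_f t₀) := hcomp1.self_of_nhds.symm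
  have hw2 : ⟪binor p_f (s_f t₀), p t₀ - p_f (s_f t₀)⟫ = wb2 (s_f t₀) := hcomp2.self_of_nhds.symm
  have hT := mul_deriv_eq_of_comp_eq_inner (E := tang p_f) hd2.self_of_nhds.hasDerivAt hpf
    hp.hasDerivAt hsf.hasDerivAt (hasDerivAt_const _ 0) (htrans.mono fun _ h => h.symm)
  have hN := mul_deriv_eq_of_comp_eq_inner hn.hasDerivAt hpf hp.hasDerivAt hsf.hasDerivAt
    hwb1.hasDerivAt hcomp1
  have hB := mul_deriv_eq_of_comp_eq_inner
    (differentiableAt_binor hd2.self_of_nhds hn).hasDerivAt hpf hp.hasDerivAt hsf.hasDerivAt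
    hwb2.hasDerivAt hcomp2
  rw [← curv_smul_nor, real_inner_smul_left, hw1, real_inner_self_eq_norm_sq,
    norm_tang hunit] at hT
  rw [inner_deriv_nor_of_inner_tang_eq_zero hunit hd2.self_of_nhds hk hn hX, hw2,
    real_inner_comm (tang p_f _), inner_tang_nor hunit hd2.self_of_nhds] at hN
  rw [inner_deriv_binor_of_inner_tang_eq_zero hunit hd2 hk hn hX, hw1, inner_binor_tang] at hB
  have hσ : deriv s_f t₀ * (1 - curv p_f (s_f t₀) * wb1 (s_f t₀)) =
      ⟪tang p_f (s_f t₀), deriv p t₀⟫ := by linear_combination hT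
  exact ⟨eq_mul_div_add_of_mul_eq hvt hσ (by linear_combination hN),
    (eq_mul_div_add_of_mul_eq hvt hσ (by linear_combination hB)).trans (sub_eq_add_neg _ _).symm⟩

theorem spatial_transverse_dynamics
    (p_f p : ℝ → EuclideanSpace ℝ (Fin 3)) (s_f wb1 wb2 : ℝ → ℝ) (t₀ : ℝ)
    (hd1 : ∀ᶠ s in nhds (s_f t₀), DifferentiableAt ℝ p_f s)
    (hd2 : ∀ᶠ s in nhds (s_f t₀), DifferentiableAt ℝ (deriv p_f) s)
    (hunit : ∀ s : ℝ, ‖deriv p_f s‖ = 1)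
    (hk : ∀ᶠ s in nhds (s_f t₀), curv p_f s ≠ 0)
    (hn : DifferentiableAt ℝ (nor p_f) (s_f t₀))
    (hp : DifferentiableAt ℝ p t₀)
    (hsf : DifferentiableAt ℝ s_f t₀)
    (htrans : ∀ᶠ t in nhds t₀, ⟪tang p_f (s_f t), p t - p_f (s_f t)⟫ = 0)
    (hwb1 : DifferentiableAt ℝ wb1 (s_f t₀))
    (hwb2 : DifferentiableAt ℝ wb2 (s_f t₀))
    (hcomp1 : ∀ᶠ t in nhds t₀, wb1 (s_f t) = w1 p_f p s_f t)
    (hcomp2 : ∀ᶠ t in nhds t₀, wb2 (s_f t) = w2 p_f p s_f t)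
    (hvt : ⟪tang p_f (s_f t₀), deriv p t₀⟫ ≠ 0)
    (hden : 1 - curv p_f (s_f t₀) * wb1 (s_f t₀) ≠ 0) :
    deriv wb1 (s_f t₀) =
        ⟪nor p_f (s_f t₀), deriv p t₀⟫ * (1 - curv p_f (s_f t₀) * wb1 (s_f t₀)) /
            ⟪tang p_f (s_f t₀), deriv p t₀⟫ +
          tors p_f (s_f t₀) * wb2 (s_f t₀) ∧
      deriv wb2 (s_f t₀) =
        ⟪binor p_f (s_f t₀), deriv p t₀⟫ * (1 - curv p_f (s_f t₀) * wb1 (s_f t₀)) /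
            ⟪tang p_f (s_f t₀), deriv p t₀⟫ -
          tors p_f (s_f t₀) * wb1 (s_f t₀) :=
  spatial_transverse_dynamics_general p_f p s_f wb1 wb2 t₀ hd1 hd2 hunit hk hn hp hsf htrans hwb1
    hwb2 hcomp1 hcomp2 hvt
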